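/- arXiv:1403.6032 — 4 statements merged into one kernel-verified Lean document; each statement's English description precedes it below -/
import Mathlib

section
/- Let (X, Σ) be a measurable space with two finite measures μ and ν. If Σ is generated by a field F, then the total variation distance satisfies sup_{E ∈ Σ} |μ(E) − ν(E)| = sup_{E ∈ F} |μ(E) − ν(E)|. -/
/-!
A field `𝒜` generating the σ-algebra is dense for the finite measure `μ + ν`: every measurable
`E` has some `A ∈ 𝒜` with `(μ + ν) (E ∆ A) < ε`. Since `|μ E - μ A| + |ν E - ν A| ≤ (μ + ν) (E ∆ A)`,
the quantity `|μ E - ν E|` is then within `ε` of `|μ A - ν A|`, so both suprema agree.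
-/

open MeasureTheory Set
open scoped symmDiff

lemma csSup_image_eq_of_forall_le_add {α : Type*} {f : α → ℝ} {S T : Set α}
    (hT : T.Nonempty) (hTS : T ⊆ S) (hbdd : BddAbove (f '' S))
    (happrox : ∀ s ∈ S, ∀ ε > 0, ∃ t ∈ T, f s ≤ f t + ε) :
    sSup (f '' S) = sSup (f '' T) := by
  have hbddT : BddAbove (f '' T) := hbdd.mono (image_mono hTS)
  refine le_antisymm (csSup_le ((hT.mono hTS).image f) ?_)
    (csSup_le_csSup hbdd (hT.image f) (image_mono hTS))
  rintro _ ⟨s, hs, rfl⟩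
  refine le_of_forall_pos_le_add fun ε hε ↦ ?_
  obtain ⟨t, ht, hst⟩ := happrox s hs ε hε
  exact hst.trans (add_le_add_left (le_csSup hbddT (mem_image_of_mem f ht)) ε)

namespace MeasureTheory.Measure

variable {X : Type*} [MeasurableSpace X] (μ ν : Measure X) [IsFiniteMeasure μ] [IsFiniteMeasure ν]

lemma abs_measureReal_sub_le_measureReal_univ_add (E : Set X) :
    |μ.real E - ν.real E| ≤ μ.real univ + ν.real univ := by
  have hμ : μ.real E ≤ μ.real univ := measureReal_mono (subset_univ E)
  have hν : ν.real E ≤ ν.real univ := measureReal_mono (subset_univ E)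
  rw [abs_sub_le_iff]
  constructor <;> linarith [measureReal_nonneg (μ := μ) (s := E),
    measureReal_nonneg (μ := ν) (s := E)]

lemma abs_measureReal_sub_le_add_symmDiff {E A : Set X} (hE : MeasurableSet E)
    (hA : MeasurableSet A) :
    |μ.real E - ν.real E| ≤ |μ.real A - ν.real A| + (μ + ν).real (E ∆ A) := by
  have hμ := abs_measureReal_sub_le_measureReal_symmDiff (μ := μ) hE.nullMeasurableSet
    hA.nullMeasurableSet
  have hν := abs_measureReal_sub_le_measureReal_symmDiff (μ := ν) hE.nullMeasurableSet
    hA.nullMeasurableSet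
  rw [measureReal_add_apply]
  calc |μ.real E - ν.real E|
      = |(μ.real A - ν.real A) + ((μ.real E - μ.real A) - (ν.real E - ν.real A))| := by
        congr 1; ring
    _ ≤ |μ.real A - ν.real A| + |(μ.real E - μ.real A) - (ν.real E - ν.real A)| :=
        abs_add_le _ _
    _ ≤ |μ.real A - ν.real A| + (|μ.real E - μ.real A| + |ν.real E - ν.real A|) := by
        gcongr; exact abs_sub _ _
    _ ≤ _ := by gcongr

variable {μ ν} {𝒜 : Set (Set X)}

lemma MeasureDense.exists_abs_measureReal_sub_le_add (h𝒜 : (μ + ν).MeasureDense 𝒜)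
    {E : Set X} (hE : MeasurableSet E) {ε : ℝ} (hε : 0 < ε) :
    ∃ A ∈ 𝒜, |μ.real E - ν.real E| ≤ |μ.real A - ν.real A| + ε := by
  obtain ⟨A, hA𝒜, hEA⟩ := h𝒜.approx E hE (measure_ne_top _ _) ε hε
  refine ⟨A, hA𝒜, (abs_measureReal_sub_le_add_symmDiff μ ν hE (h𝒜.measurable A hA𝒜)).trans ?_⟩
  gcongr
  rw [← ofReal_measureReal] at hEA
  exact ((ENNReal.ofReal_lt_ofReal_iff hε).1 hEA).le

theorem MeasureDense.sSup_abs_measureReal_sub_eq (h𝒜 : (μ + ν).MeasureDense 𝒜) :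
    sSup ((fun E ↦ |μ.real E - ν.real E|) '' {E | MeasurableSet E})
      = sSup ((fun E ↦ |μ.real E - ν.real E|) '' 𝒜) :=
  csSup_image_eq_of_forall_le_add h𝒜.nonempty h𝒜.measurable
    ⟨_, forall_mem_image.2 fun E _ ↦ abs_measureReal_sub_le_measureReal_univ_add μ ν E⟩
    fun _ hE _ hε ↦ h𝒜.exists_abs_measureReal_sub_le_add hE hε

end MeasureTheory.Measure

/-- If the σ-algebra is generated by a field `𝒜`, the total variation distance between
two finite measures is already attained as a supremum over `𝒜`. -/
theorem totalVariation_sup_on_field {X : Type*} (𝒜 : Set (Set X))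
    (h𝒜 : IsSetAlgebra 𝒜)
    (μ ν : @Measure X (MeasurableSpace.generateFrom 𝒜))
    (hμ : μ Set.univ < ⊤) (hν : ν Set.univ < ⊤) :
    sSup {r : ℝ | ∃ E : Set X, MeasurableSet[MeasurableSpace.generateFrom 𝒜] E ∧
        r = |(μ E).toReal - (ν E).toReal|}
      = sSup {r : ℝ | ∃ E ∈ 𝒜, r = |(μ E).toReal - (ν E).toReal|} := by
  let _ : MeasurableSpace X := MeasurableSpace.generateFrom 𝒜
  have : IsFiniteMeasure μ := ⟨hμ⟩
  have : IsFiniteMeasure ν := ⟨hν⟩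
  have hdense : (μ + ν).MeasureDense 𝒜 :=
    .of_generateFrom_isSetAlgebra_finite _ h𝒜 rfl
  convert hdense.sSup_abs_measureReal_sub_eq using 2 <;> ext r <;> simp [eq_comm, Measure.real]
end

section
/- Let μ, ν be probability measures on a measurable space (X, Σ) where the diagonal is measurable in the product σ-algebra. Then the total variation distance equals the minimum discrepancy over couplings: sup_{E ∈ Σ} |μ(E) − ν(E)| = min { ω({(x,y) : x ≠ y}) : ω is a coupling of (μ, ν) }, and the minimum is attained by some coupling. -/
/-!
Every coupling `ω` of `(μ, ν)` satisfies `μ E ≤ ν E + ω {x ≠ y}`, since a pair whose first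
coordinate lies in `E` either has its second coordinate in `E` or lies off the diagonal; hence
its discrepancy bounds every `|μ E - ν E|`. Conversely, let `P` be a Hahn set on which `ν ≤ μ`.
Then `μ = c + α` and `ν = c + β` with common part `c = ν|P + μ|Pᶜ` and residuals
`α = μ|P - ν|P`, `β = ν|Pᶜ - μ|Pᶜ` of equal mass `μ P - ν P`. Putting `c` on the diagonal and
the product of `α` and `β`, rescaled by the inverse of that mass, off it gives a coupling whose
discrepancy is at most `μ P - ν P`, which is the value of `|μ E - ν E|` at `E = P`.
-/

open MeasureTheory Set
open scoped ENNReal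

namespace MeasureTheory

variable {Ω X Y : Type*} [MeasurableSpace Ω] [MeasurableSpace X] [MeasurableSpace Y]

lemma IsHahnDecomposition.eq_add_sub {μ ν : Measure X} [IsFiniteMeasure μ] {s : Set X}
    (h : IsHahnDecomposition μ ν s) :
    ν = μ.restrict s + ν.restrict sᶜ + (ν.restrict s - μ.restrict s) := by
  conv_lhs => rw [← Measure.restrict_add_restrict_compl (μ := ν) h.measurableSet,
    ← Measure.sub_add_cancel_of_le h.le_on]
  rw [add_comm (ν.restrict s - μ.restrict s), add_right_comm]

namespace Measure

lemma map_le_map_add_measure_ne {ω : Measure Ω} {f g : Ω → X} (hf : Measurable f)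
    (hg : Measurable g) {E : Set X} (hE : MeasurableSet E) :
    ω.map f E ≤ ω.map g E + ω {p | f p ≠ g p} := by
  rw [map_apply hf hE, map_apply hg hE]
  refine (measure_mono fun p (hp : f p ∈ E) => ?_).trans (measure_union_le _ _)
  by_cases hfg : f p = g p
  · exact Or.inl (show g p ∈ E from hfg ▸ hp)
  · exact Or.inr hfg

lemma abs_toReal_sub_le_measure_ne {ω : Measure (X × X)} [IsFiniteMeasure ω] {μ ν : Measure X}
    (hμ : ω.map Prod.fst = μ) (hν : ω.map Prod.snd = ν) {E : Set X} (hE : MeasurableSet E) :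
    |(μ E).toReal - (ν E).toReal| ≤ (ω {p | p.1 ≠ p.2}).toReal := by
  subst hμ hν
  have hswap : {p : X × X | p.2 ≠ p.1} = {p | p.1 ≠ p.2} := by ext; exact ne_comm
  have hfst := map_le_map_add_measure_ne (ω := ω) measurable_fst measurable_snd hE
  have hsnd := map_le_map_add_measure_ne (ω := ω) measurable_snd measurable_fst hE
  rw [hswap] at hsnd
  rw [abs_sub_le_iff, sub_le_iff_le_add', sub_le_iff_le_add']
  exact ⟨ENNReal.toReal_le_add hfst (measure_ne_top _ _) (measure_ne_top _ _),
    ENNReal.toReal_le_add hsnd (measure_ne_top _ _) (measure_ne_top _ _)⟩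

lemma tsub_le_measure_ne {ω : Measure (X × X)} {μ ν : Measure X} (hμ : ω.map Prod.fst = μ)
    (hν : ω.map Prod.snd = ν) {E : Set X} (hE : MeasurableSet E) :
    μ E - ν E ≤ ω {p | p.1 ≠ p.2} := by
  subst hμ hν
  exact tsub_le_iff_left.2 (map_le_map_add_measure_ne measurable_fst measurable_snd hE)

lemma inv_measure_univ_smul_smul_self (α : Measure X) [IsFiniteMeasure α] :
    (α univ)⁻¹ • (α univ • α) = α := by
  rcases eq_zero_or_neZero α with rfl | _
  · simp
  · rw [smul_smul, ENNReal.inv_mul_cancel (NeZero.ne _) (measure_ne_top _ _), one_smul]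

lemma map_fst_inv_smul_prod {α : Measure X} {β : Measure Y} [IsFiniteMeasure α] [SFinite β]
    (h : α univ = β univ) : ((α univ)⁻¹ • α.prod β).map Prod.fst = α := by
  rw [Measure.map_smul, map_fst_prod, ← h, inv_measure_univ_smul_smul_self]

lemma map_snd_inv_smul_prod {α : Measure X} {β : Measure Y} [SFinite α] [IsFiniteMeasure β]
    (h : α univ = β univ) : ((α univ)⁻¹ • α.prod β).map Prod.snd = β := by
  rw [Measure.map_smul, map_snd_prod, h, inv_measure_univ_smul_smul_self]

lemma map_fst_map_diag (c : Measure X) : (c.map Function.diag).map Prod.fst = c := by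
  rw [map_map measurable_fst measurable_diag]
  exact map_id

lemma map_snd_map_diag (c : Measure X) : (c.map Function.diag).map Prod.snd = c := by
  rw [map_map measurable_snd measurable_diag]
  exact map_id

theorem exists_coupling_of_add {c α β : Measure X} [IsFiniteMeasure α] [IsFiniteMeasure β]
    (hD : MeasurableSet {p : X × X | p.1 ≠ p.2}) (hαβ : α univ = β univ) :
    ∃ ω : Measure (X × X), ω.map Prod.fst = c + α ∧ ω.map Prod.snd = c + β ∧
      ω {p | p.1 ≠ p.2} ≤ α univ := by
  set π := (α univ)⁻¹ • α.prod β
  have hπ : π.map Prod.fst = α := map_fst_inv_smul_prod hαβ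
  have hdiag : (Function.diag : X → X × X) ⁻¹' {p | p.1 ≠ p.2} = ∅ :=
    eq_empty_of_forall_notMem fun _ hx => hx rfl
  refine ⟨c.map Function.diag + π, ?_, ?_, ?_⟩
  · rw [Measure.map_add _ _ measurable_fst, map_fst_map_diag, hπ]
  · rw [Measure.map_add _ _ measurable_snd, map_snd_map_diag, map_snd_inv_smul_prod hαβ]
  · calc (c.map Function.diag + π) {p | p.1 ≠ p.2}
        = π {p | p.1 ≠ p.2} := by
          rw [add_apply, map_apply measurable_diag hD, hdiag,
            measure_empty, zero_add]
      _ ≤ π univ := measure_mono (subset_univ _)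
      _ = α univ := by rw [← hπ, map_apply measurable_fst .univ, preimage_univ]

theorem exists_coupling_measure_ne_le {μ ν : Measure X} [IsFiniteMeasure μ] [IsFiniteMeasure ν]
    (hD : MeasurableSet {p : X × X | p.1 ≠ p.2}) (hμν : μ univ = ν univ) {P : Set X}
    (hP : IsHahnDecomposition ν μ P) :
    ∃ ω : Measure (X × X), ω.map Prod.fst = μ ∧ ω.map Prod.snd = ν ∧
      ω {p | p.1 ≠ p.2} ≤ μ P - ν P := by
  have hμ := hP.eq_add_sub
  have hν := hP.compl.eq_add_sub
  rw [compl_compl, add_comm (μ.restrict Pᶜ)] at hν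
  set c := ν.restrict P + μ.restrict Pᶜ
  set α := μ.restrict P - ν.restrict P
  set β := ν.restrict Pᶜ - μ.restrict Pᶜ
  have hαβ : α univ = β univ := by
    rw [hμ, hν, add_apply, add_apply] at hμν
    exact (ENNReal.add_right_inj (measure_ne_top c univ)).1 hμν
  obtain ⟨ω, hfst, hsnd, hωD⟩ := exists_coupling_of_add (c := c) hD hαβ
  refine ⟨ω, hμ ▸ hfst, hν ▸ hsnd, hωD.trans_eq ?_⟩
  rw [sub_apply .univ hP.le_on, restrict_apply_univ, restrict_apply_univ]

end Measure

end MeasureTheory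

/-- Coupling characterization of the total variation distance: there is a coupling `ω*`
of `(μ, ν)` attaining `sup_E |μ E − ν E| = ω* {(x,y) | x ≠ y}`, and `ω*` minimizes the
discrepancy among all couplings. -/
theorem totalVariation_eq_min_coupling {X : Type*} [MeasurableSpace X]
    (hD : MeasurableSet {p : X × X | p.1 ≠ p.2})
    (μ ν : Measure X) [IsProbabilityMeasure μ] [IsProbabilityMeasure ν] :
    ∃ ω : Measure (X × X), IsProbabilityMeasure ω ∧
      ω.map Prod.fst = μ ∧ ω.map Prod.snd = ν ∧
      (ω {p : X × X | p.1 ≠ p.2}).toReal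
        = sSup {r : ℝ | ∃ E : Set X, MeasurableSet E ∧ r = |(μ E).toReal - (ν E).toReal|} ∧
      ∀ ω' : Measure (X × X), IsProbabilityMeasure ω' →
        ω'.map Prod.fst = μ → ω'.map Prod.snd = ν →
        ω {p : X × X | p.1 ≠ p.2} ≤ ω' {p : X × X | p.1 ≠ p.2} := by
  obtain ⟨P, hP⟩ := exists_isHahnDecomposition ν μ
  obtain ⟨ω, hfst, hsnd, hωD⟩ :=
    Measure.exists_coupling_measure_ne_le hD (by rw [measure_univ, measure_univ]) hP
  have hω : IsProbabilityMeasure ω := by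
    have : IsProbabilityMeasure (ω.map Prod.fst) := hfst ▸ inferInstance
    exact Measure.isProbabilityMeasure_of_map Prod.fst
  have hωD_eq : ω {p | p.1 ≠ p.2} = μ P - ν P :=
    le_antisymm hωD (Measure.tsub_le_measure_ne hfst hsnd hP.measurableSet)
  have hνμ : ν P ≤ μ P := by simpa using hP.le_on P
  have hgreatest : IsGreatest
      {r : ℝ | ∃ E : Set X, MeasurableSet E ∧ r = |(μ E).toReal - (ν E).toReal|}
      (ω {p | p.1 ≠ p.2}).toReal := by
    refine ⟨⟨P, hP.measurableSet, ?_⟩, ?_⟩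
    · rw [hωD_eq, ENNReal.toReal_sub_of_le hνμ (measure_ne_top _ _), abs_of_nonneg]
      exact sub_nonneg.2 (ENNReal.toReal_mono (measure_ne_top _ _) hνμ)
    · rintro r ⟨E, hE, rfl⟩
      exact Measure.abs_toReal_sub_le_measure_ne hfst hsnd hE
  refine ⟨ω, hω, hfst, hsnd, hgreatest.csSup_eq.symm, fun ω' _ hfst' hsnd' => ?_⟩
  exact hωD_eq ▸ Measure.tsub_le_measure_ne hfst' hsnd' hP.measurableSet
end

section
/- The total variation distance between two exponential distributions Exp(λ) and Exp(λ') with λ ≠ λ', λ, λ' > 0, equals | e^{λ'(log λ − log λ')/(λ' − λ)} − e^{λ(log λ − log λ')/(λ − λ')} |. -/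
/-!
The densities `λ e^{-λx}` and `λ' e^{-λ'x}` cross exactly once on `[0, ∞)`, at `t*`. Hence
`S = (-∞, t*]` is a Hahn set for `Exp(λ) - Exp(λ')` (say `λ' < λ`): on subsets of `S` the first
measure dominates, on subsets of `Sᶜ` the second. For two probability measures this forces
`|μ E - ν E| ≤ μ S - ν S` for every `E`, with equality at `E = S`, and the value at `S` is read
off the distribution function `1 - e^{-λt}`.
-/

open MeasureTheory ProbabilityTheory Real Set

section TotalVariation

variable {α : Type*} [MeasurableSpace α]

lemma measureReal_sub_mem_Icc_of_le {μ ν : Measure α} [IsFiniteMeasure μ] (h : ν ≤ μ)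
    {E : Set α} (hE : MeasurableSet E) :
    μ.real E - ν.real E ∈ Icc 0 (μ.real univ - ν.real univ) := by
  have := isFiniteMeasure_of_le μ h
  have hle (A : Set α) : ν.real A ≤ μ.real A := ENNReal.toReal_mono (measure_ne_top μ A) (h A)
  have hμ := measureReal_add_measureReal_compl (μ := μ) hE
  have hν := measureReal_add_measureReal_compl (μ := ν) hE
  exact ⟨sub_nonneg.2 (hle E), by linarith [hle Eᶜ]⟩

lemma restrict_withDensity_mono {μ : Measure α} {f g : α → ENNReal} {s : Set α}
    (hs : MeasurableSet s) (h : ∀ x ∈ s, f x ≤ g x) :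
    (μ.withDensity f).restrict s ≤ (μ.withDensity g).restrict s := by
  rw [restrict_withDensity hs, restrict_withDensity hs]
  exact withDensity_mono (ae_restrict_of_forall_mem hs h)

variable {μ ν : Measure α} [IsProbabilityMeasure μ] [IsProbabilityMeasure ν] {S : Set α}

lemma abs_measureReal_sub_le_of_restrict_le (hS : MeasurableSet S)
    (hS_le : ν.restrict S ≤ μ.restrict S) (hSc_le : μ.restrict Sᶜ ≤ ν.restrict Sᶜ)
    {E : Set α} (hE : MeasurableSet E) :
    |μ.real E - ν.real E| ≤ μ.real S - ν.real S := by
  have hin := measureReal_sub_mem_Icc_of_le hS_le hE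
  have hout := measureReal_sub_mem_Icc_of_le hSc_le hE
  simp only [measureReal_restrict_apply hE, measureReal_restrict_apply MeasurableSet.univ,
    univ_inter, probReal_compl_eq_one_sub hS, mem_Icc] at hin hout
  have hμ := measureReal_inter_add_sdiff (μ := μ) (s := E) hS
  have hν := measureReal_inter_add_sdiff (μ := ν) (s := E) hS
  rw [sdiff_eq] at hμ hν
  rw [abs_le]
  constructor <;> linarith

lemma sSup_abs_measureReal_sub_of_restrict_le (hS : MeasurableSet S)
    (hS_le : ν.restrict S ≤ μ.restrict S) (hSc_le : μ.restrict Sᶜ ≤ ν.restrict Sᶜ) :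
    sSup {r : ℝ | ∃ E : Set α, MeasurableSet E ∧ r = |μ.real E - ν.real E|}
      = μ.real S - ν.real S := by
  have hbound {E : Set α} (hE : MeasurableSet E) :=
    abs_measureReal_sub_le_of_restrict_le hS hS_le hSc_le hE
  refine IsGreatest.csSup_eq ⟨⟨S, hS, ?_⟩, ?_⟩
  · exact (abs_of_nonneg ((abs_nonneg _).trans (hbound hS))).symm
  · rintro r ⟨E, hE, rfl⟩
    exact hbound hE

end TotalVariation

lemma mul_exp_neg_mul_le_mul_exp_neg_mul_iff {a b : ℝ} (ha : 0 < a) (hb : 0 < b) (x : ℝ) :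
    b * exp (-(b * x)) ≤ a * exp (-(a * x)) ↔ (a - b) * x ≤ log a - log b := by
  have hexp {c : ℝ} (hc : 0 < c) : c * exp (-(c * x)) = exp (log c - c * x) := by
    rw [sub_eq_add_neg, exp_add, exp_log hc]
  rw [hexp ha, hexp hb, exp_le_exp]
  constructor <;> intro h <;> linarith

lemma exponentialPDF_le_exponentialPDF {l l' x : ℝ} (hl : 0 < l) (hl' : 0 < l')
    (hx : (l - l') * x ≤ log l - log l') :
    exponentialPDF l' x ≤ exponentialPDF l x := by
  rcases lt_or_ge x 0 with hneg | hnonneg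
  · rw [exponentialPDF_of_neg hneg, exponentialPDF_of_neg hneg]
  · rw [exponentialPDF_of_nonneg hnonneg, exponentialPDF_of_nonneg hnonneg]
    exact ENNReal.ofReal_le_ofReal ((mul_exp_neg_mul_le_mul_exp_neg_mul_iff hl hl' x).2 hx)

lemma expMeasure_real_Iic {r t : ℝ} (hr : 0 < r) (ht : 0 ≤ t) :
    (expMeasure r).real (Iic t) = 1 - exp (-(r * t)) := by
  have := isProbabilityMeasure_expMeasure hr
  rw [← cdf_eq_real, cdf_expMeasure_eq hr, if_pos ht]

/-- Total variation distance between two exponential distributions `Exp(λ)`, `Exp(λ')`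
with `λ ≠ λ'`: with `t* = (log λ − log λ')/(λ − λ')`, it equals `|e^{−λ' t*} − e^{−λ t*}|`
(equivalently `|e^{λ'(log λ − log λ')/(λ' − λ)} − e^{−λ(log λ − log λ')/(λ − λ')}|`). -/
theorem totalVariation_exponential (l l' : ℝ) (hl : 0 < l) (hl' : 0 < l') (hne : l ≠ l') :
    sSup {r : ℝ | ∃ E : Set ℝ, MeasurableSet E ∧
        r = |((expMeasure l) E).toReal - ((expMeasure l') E).toReal|}
      = |Real.exp (-(l' * ((Real.log l - Real.log l') / (l - l')))) -
          Real.exp (-(l * ((Real.log l - Real.log l') / (l - l'))))| := by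
  wlog hlt : l' < l generalizing l l'
  · have hswap : (log l' - log l) / (l' - l) = (log l - log l') / (l - l') := by
      rw [← neg_sub, ← neg_sub l, neg_div_neg_eq]
    rw [abs_sub_comm, ← hswap, ← this l' l hl' hl hne.symm (hne.lt_or_gt.resolve_right hlt)]
    congr 1
    ext r
    simp only [abs_sub_comm]
  have := isProbabilityMeasure_expMeasure hl
  have := isProbabilityMeasure_expMeasure hl'
  set t := (log l - log l') / (l - l')
  have hdiff : 0 < l - l' := sub_pos.2 hlt
  have ht : 0 < t := div_pos (sub_pos.2 (log_lt_log hl' hlt)) hdiff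
  -- `expMeasure r` unfolds to `volume.withDensity (exponentialPDF r)`.
  have hS_le : (expMeasure l').restrict (Iic t) ≤ (expMeasure l).restrict (Iic t) :=
    restrict_withDensity_mono measurableSet_Iic fun x hx ↦
      exponentialPDF_le_exponentialPDF hl hl' ((le_div_iff₀' hdiff).1 hx)
  have hSc_le : (expMeasure l).restrict (Iic t)ᶜ ≤ (expMeasure l').restrict (Iic t)ᶜ :=
    restrict_withDensity_mono measurableSet_Iic.compl fun x hx ↦
      exponentialPDF_le_exponentialPDF hl' hl (by linarith [(div_lt_iff₀' hdiff).1 (not_le.1 hx)])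
  refine (sSup_abs_measureReal_sub_of_restrict_le measurableSet_Iic hS_le hSc_le).trans ?_
  have hexp : exp (-(l * t)) ≤ exp (-(l' * t)) := by gcongr
  rw [expMeasure_real_Iic hl ht.le, expMeasure_real_Iic hl' ht.le, abs_of_nonneg (by linarith)]
  ring
end

section
/- Let S be a finite set and d : S × S → [0,1] a pseudometric with d(u,v) ∈ {0} exactly when u R v for an equivalence relation R (i.e., d(u,v) = 0 iff (u,v) ∈ R). Then for probability distributions μ, ν on S: K_d(μ, ν) = 0 if and only if μ(C) = ν(C) for every equivalence class C of R. -/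
open Finset

/-- A coupling of two distributions on a finite set. -/
def IsCoupling {S : Type*} [Fintype S] (μ ν : S → ℝ) (ω : S × S → ℝ) : Prop :=
  (∀ p, 0 ≤ ω p) ∧ (∀ u, ∑ v, ω (u, v) = μ u) ∧ (∀ v, ∑ u, ω (u, v) = ν v)

/-- The Kantorovich value of `d` between `μ` and `ν`. -/
noncomputable def Kant {S : Type*} [Fintype S] (d : S × S → ℝ) (μ ν : S → ℝ) : ℝ :=
  sInf {r : ℝ | ∃ ω, IsCoupling μ ν ω ∧ r = ∑ p : S × S, ω p * d p}

/-!
A coupling can only move mass between different `R`-classes along pairs `(u, v)` with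
`¬ R u v`, and on the finitely many such pairs `d` is bounded below by some `ε > 0`; hence every
coupling costs at least `ε · |μ(C) - ν(C)|` for each class `C`, and `K_d(μ, ν) = 0` forces
`μ(C) = ν(C)`. Conversely, if `μ` and `ν` agree on every class, coupling them independently
inside each class, `ω(u, v) = μ(u) ν(v) / μ([u])` for `u R v`, costs nothing.
-/

theorem exists_pos_le_of_forall_pos {α : Type*} [Finite α] {P : α → Prop} {f : α → ℝ}
    (hf : ∀ a, P a → 0 < f a) : ∃ ε > 0, ∀ a, P a → ε ≤ f a := by
  rcases {a | P a}.eq_empty_or_nonempty with h | hne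
  · exact ⟨1, one_pos, fun a ha => (Set.eq_empty_iff_forall_notMem.1 h a ha).elim⟩
  · obtain ⟨a, ha, hmin⟩ := Set.exists_min_image _ f (Set.toFinite _) hne
    exact ⟨f a, hf a ha, hmin⟩

section

variable {S : Type*} [Fintype S]

section ClassMass

variable (R : S → S → Prop) [DecidableRel R]

def classMass (μ : S → ℝ) (u : S) : ℝ :=
  ∑ v, if R u v then μ v else 0

variable {R} {μ : S → ℝ}

theorem classMass_nonneg (hμ0 : ∀ x, 0 ≤ μ x) (u : S) : 0 ≤ classMass R μ u :=
  sum_nonneg fun v _ => by split_ifs; exacts [hμ0 v, le_rfl]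

theorem le_classMass (hR : Equivalence R) (hμ0 : ∀ x, 0 ≤ μ x) (u : S) :
    μ u ≤ classMass R μ u := by
  unfold classMass
  have h := single_le_sum (f := fun v => if R u v then μ v else 0)
    (fun v _ => by split_ifs; exacts [hμ0 v, le_rfl]) (mem_univ u)
  simpa only [if_pos (hR.refl u)] using h

theorem classMass_congr (hR : Equivalence R) {u v : S} (huv : R u v) :
    classMass R μ u = classMass R μ v :=
  sum_congr rfl fun _ _ => if_congr ⟨hR.trans (hR.symm huv), hR.trans huv⟩ rfl rfl

theorem sum_ite_rel_left (hR : Equivalence R) (v : S) :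
    (∑ u, if R u v then μ u else 0) = classMass R μ v :=
  sum_congr rfl fun _ _ => if_congr ⟨hR.symm, hR.symm⟩ rfl rfl

end ClassMass

namespace IsCoupling

variable {μ ν : S → ℝ} {ω : S × S → ℝ}

theorem prod (hμ0 : ∀ x, 0 ≤ μ x) (hν0 : ∀ x, 0 ≤ ν x) (hμ1 : ∑ x, μ x = 1)
    (hν1 : ∑ x, ν x = 1) : IsCoupling μ ν fun p => μ p.1 * ν p.2 :=
  ⟨fun p => mul_nonneg (hμ0 _) (hν0 _),
    fun u => by simp only [← mul_sum, hν1, mul_one],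
    fun v => by simp only [← sum_mul, hμ1, one_mul]⟩

theorem sum_fst_mul (hω : IsCoupling μ ν ω) (f : S → ℝ) :
    ∑ v, f v * μ v = ∑ p : S × S, f p.1 * ω p := by
  simp only [← hω.2.1, mul_sum, Fintype.sum_prod_type]

theorem sum_snd_mul (hω : IsCoupling μ ν ω) (f : S → ℝ) :
    ∑ v, f v * ν v = ∑ p : S × S, f p.2 * ω p := by
  simp only [← hω.2.2, mul_sum, Fintype.sum_prod_type_right]

end IsCoupling

section Kantorovich

variable {d : S × S → ℝ} {μ ν : S → ℝ}

theorem le_kant {a : ℝ} (hne : ∃ ω, IsCoupling μ ν ω)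
    (h : ∀ ω, IsCoupling μ ν ω → a ≤ ∑ p, ω p * d p) : a ≤ Kant d μ ν := by
  obtain ⟨ω, hω⟩ := hne
  exact le_csInf ⟨_, ω, hω, rfl⟩ (by rintro r ⟨ω, hω, rfl⟩; exact h ω hω)

theorem kant_eq_zero_of_isCoupling (hd0 : ∀ p, 0 ≤ d p) {ω : S × S → ℝ}
    (hω : IsCoupling μ ν ω) (hcost : ∑ p, ω p * d p = 0) : Kant d μ ν = 0 := by
  have hlb : ∀ ω', IsCoupling μ ν ω' → 0 ≤ ∑ p, ω' p * d p :=
    fun ω' hω' => sum_nonneg fun p _ => mul_nonneg (hω'.1 p) (hd0 p)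
  refine le_antisymm (csInf_le ⟨0, ?_⟩ ⟨ω, hω, hcost.symm⟩) (le_kant ⟨ω, hω⟩ hlb)
  rintro r ⟨ω', hω', rfl⟩
  exact hlb ω' hω'

end Kantorovich

section Classes

variable {R : S → S → Prop} [DecidableRel R] {μ ν : S → ℝ}

theorem mul_abs_classMass_sub_le_cost (hR : Equivalence R) {d : S × S → ℝ}
    (hd0 : ∀ p, 0 ≤ d p) {ε : ℝ} (hε : 0 ≤ ε) (hεd : ∀ p : S × S, ¬R p.1 p.2 → ε ≤ d p)
    {ω : S × S → ℝ} (hω : IsCoupling μ ν ω) (u : S) :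
    ε * |classMass R μ u - classMass R ν u| ≤ ∑ p, ω p * d p := by
  set χ : S → ℝ := fun v => if R u v then 1 else 0
  have hχ : ∀ f : S → ℝ, classMass R f u = ∑ v, χ v * f v := fun f => by
    simp only [classMass, χ, ite_mul, one_mul, zero_mul]
  -- `χ` separates `p.1` from `p.2` only across classes, where `d ≥ ε`.
  have hstep : ∀ p : S × S, ε * |χ p.1 - χ p.2| ≤ d p := by
    intro p
    by_cases h1 : R u p.1 <;> by_cases h2 : R u p.2 <;>
      simp only [χ, h1, h2, if_true, if_false, sub_self, abs_zero, mul_zero, hd0 p]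
    · simpa using hεd p fun h => h2 (hR.trans h1 h)
    · simpa using hεd p fun h => h1 (hR.trans h2 (hR.symm h))
  calc ε * |classMass R μ u - classMass R ν u|
      = |ε * (classMass R μ u - classMass R ν u)| := by rw [abs_mul, abs_of_nonneg hε]
    _ = |∑ p : S × S, ε * (χ p.1 - χ p.2) * ω p| := by
        rw [hχ, hχ, hω.sum_fst_mul, hω.sum_snd_mul, ← sum_sub_distrib, mul_sum]
        exact congrArg abs (sum_congr rfl fun p _ => by ring)
    _ ≤ ∑ p : S × S, ε * |χ p.1 - χ p.2| * ω p := by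
        refine (abs_sum_le_sum_abs _ _).trans (le_of_eq (sum_congr rfl fun p _ => ?_))
        rw [abs_mul, abs_mul, abs_of_nonneg hε, abs_of_nonneg (hω.1 p)]
    _ ≤ ∑ p, ω p * d p :=
        sum_le_sum fun p _ => by
          rw [mul_comm (ω p)]
          exact mul_le_mul_of_nonneg_right (hstep p) (hω.1 p)

-- On a class of `μ`-mass zero the division by zero yields `0`, the right value there.
variable (R) in
noncomputable def classCoupling (μ ν : S → ℝ) (p : S × S) : ℝ :=
  if R p.1 p.2 then μ p.1 * ν p.2 / classMass R μ p.1 else 0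

theorem isCoupling_classCoupling (hR : Equivalence R) (hμ0 : ∀ x, 0 ≤ μ x)
    (hν0 : ∀ x, 0 ≤ ν x) (h : ∀ u, classMass R μ u = classMass R ν u) :
    IsCoupling μ ν (classCoupling R μ ν) := by
  refine ⟨fun p => ?_, fun u => ?_, fun v => ?_⟩
  · unfold classCoupling
    split_ifs
    exacts [div_nonneg (mul_nonneg (hμ0 _) (hν0 _)) (classMass_nonneg hμ0 _), le_rfl]
  · have hrow : ∀ v, classCoupling R μ ν (u, v) =
        μ u / classMass R μ u * if R u v then ν v else 0 := fun v => by
      unfold classCoupling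
      split_ifs <;> ring
    rw [sum_congr rfl fun v _ => hrow v, ← mul_sum, ← classMass, ← h u]
    exact div_mul_cancel_of_imp fun hc =>
      le_antisymm (hc ▸ le_classMass hR hμ0 u) (hμ0 u)
  · have hcol : ∀ u, classCoupling R μ ν (u, v) =
        ν v / classMass R μ v * if R u v then μ u else 0 := fun u => by
      unfold classCoupling
      split_ifs with huv
      · rw [classMass_congr hR huv]; ring
      · ring
    rw [sum_congr rfl fun u _ => hcol u, ← mul_sum, sum_ite_rel_left hR, h v]
    exact div_mul_cancel_of_imp fun hc =>
      le_antisymm (hc ▸ le_classMass hR hν0 v) (hν0 v)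

end Classes

end

open Classical in
theorem kantorovich_zero_iff_classes_general {S : Type*} [Fintype S]
    (R : S → S → Prop) (hR : Equivalence R)
    (d : S × S → ℝ) (hd01 : ∀ p, d p ∈ Set.Icc (0 : ℝ) 1)
    (hker : ∀ x y, d (x, y) = 0 ↔ R x y)
    (μ ν : S → ℝ) (hμ0 : ∀ x, 0 ≤ μ x) (hν0 : ∀ x, 0 ≤ ν x)
    (hμ1 : ∑ x, μ x = 1) (hν1 : ∑ x, ν x = 1) :
    Kant d μ ν = 0 ↔
      ∀ u : S, (∑ v, if R u v then μ v else 0) = (∑ v, if R u v then ν v else 0) := by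
  have hd0 : ∀ p, 0 ≤ d p := fun p => (hd01 p).1
  change Kant d μ ν = 0 ↔ ∀ u, classMass R μ u = classMass R ν u
  constructor
  · intro hK u
    obtain ⟨ε, hε, hεd⟩ : ∃ ε > 0, ∀ p : S × S, ¬R p.1 p.2 → ε ≤ d p :=
      exists_pos_le_of_forall_pos fun p hp =>
        (hd0 p).lt_of_ne fun h => hp ((hker _ _).1 h.symm)
    have hle : ε * |classMass R μ u - classMass R ν u| ≤ 0 :=
      hK ▸ le_kant ⟨_, .prod hμ0 hν0 hμ1 hν1⟩
        fun _ hω => mul_abs_classMass_sub_le_cost hR hd0 hε.le hεd hω u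
    exact sub_eq_zero.1 (abs_nonpos_iff.1 (nonpos_of_mul_nonpos_right hle hε))
  · intro h
    refine kant_eq_zero_of_isCoupling hd0 (isCoupling_classCoupling hR hμ0 hν0 h)
      (sum_eq_zero fun ⟨x, y⟩ _ => ?_)
    by_cases hxy : R x y
    · rw [(hker x y).2 hxy, mul_zero]
    · rw [classCoupling, if_neg hxy, zero_mul]

open Classical in
/-- If the kernel of the pseudometric `d` is the equivalence relation `R`, then
`K_d(μ,ν) = 0` iff `μ` and `ν` agree on every `R`-equivalence class. -/
theorem kantorovich_zero_iff_classes {S : Type*} [Fintype S]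
    (R : S → S → Prop) (hR : Equivalence R)
    (d : S × S → ℝ) (hd01 : ∀ p, d p ∈ Set.Icc (0 : ℝ) 1)
    (hrefl : ∀ x, d (x, x) = 0)
    (hsymm : ∀ x y, d (x, y) = d (y, x))
    (htri : ∀ x y z, d (x, z) ≤ d (x, y) + d (y, z))
    (hker : ∀ x y, d (x, y) = 0 ↔ R x y)
    (μ ν : S → ℝ) (hμ0 : ∀ x, 0 ≤ μ x) (hν0 : ∀ x, 0 ≤ ν x)
    (hμ1 : ∑ x, μ x = 1) (hν1 : ∑ x, ν x = 1) :
    Kant d μ ν = 0 ↔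
      ∀ u : S, (∑ v, if R u v then μ v else 0) = (∑ v, if R u v then ν v else 0) :=
  kantorovich_zero_iff_classes_general R hR d hd01 hker μ ν hμ0 hν0 hμ1 hν1
end
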